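/- For every mixed Nash equilibrium (σ¹*,σ²*) of the routing game (with p₁>α, p₂>1, under Assumption 1), every attack μ in the support of σ²* satisfies C₂(μ) ≤ Θ, the cost of attacking a minimum cut; moreover every edge (i,j) disrupted by such a μ is saturated (x*_{ij}=c_{ij}) by every maximum flow with minimum transportation cost x*. -/

import Mathlib

open scoped BigOperators Classical

/-- A capacitated network given by its finite edge set, capacities, per-unit
transportation costs, and the (edge sets of its) `s`-`t` paths and loops. -/
structure Network where
  E : Type
  fin : Fintype E
  dec : DecidableEq E
  /-- edge capacities -/
  c : E → ℝ
  /-- per-unit transportation costs -/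
  b : E → ℝ
  /-- the `s`-`t` paths, identified with their edge sets -/
  P : Finset (Finset E)
  /-- the loops, identified with their edge sets -/
  L : Finset (Finset E)
  c_nonneg : ∀ e, 0 ≤ c e
  b_nonneg : ∀ e, 0 ≤ b e
  P_nonempty : P.Nonempty
  P_edges_nonempty : ∀ p ∈ P, p.Nonempty

attribute [instance] Network.fin Network.dec

namespace Network

variable (N : Network)

/-- All paths and loops. -/
noncomputable def Lam : Finset (Finset N.E) := N.P ∪ N.L

/-- The flow through edge `e` induced by the path/loop flow `y`. -/
noncomputable def edgeFlow (y : Finset N.E → ℝ) (e : N.E) : ℝ :=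
  ∑ l ∈ N.Lam.filter (fun l => e ∈ l), y l

/-- Feasibility of a path/loop flow: nonnegative, supported on paths and loops,
and respecting edge capacities. -/
def Feasible (y : Finset N.E → ℝ) : Prop :=
  (∀ l, 0 ≤ y l) ∧ (∀ l, l ∉ N.Lam → y l = 0) ∧ (∀ e, N.edgeFlow y e ≤ N.c e)

/-- The value `F(x)` of the initial flow: total flow on `s`-`t` paths. -/
noncomputable def val (y : Finset N.E → ℝ) : ℝ := ∑ p ∈ N.P, y p

/-- The value `F(x^μ)` of the effective flow after the attack `μ`:
only the flow on paths avoiding all disrupted edges survives. -/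
noncomputable def effVal (y : Finset N.E → ℝ) (μ : Finset N.E) : ℝ :=
  ∑ p ∈ N.P.filter (fun p => Disjoint p μ), y p

/-- Transportation cost `C₁(x) = Σ b_e x_e`. -/
noncomputable def C1 (y : Finset N.E → ℝ) : ℝ := ∑ e, N.b e * N.edgeFlow y e

/-- Cost of an attack, `C₂(μ) = Σ_{e ∈ μ} c_e`. -/
noncomputable def C2 (μ : Finset N.E) : ℝ := ∑ e ∈ μ, N.c e

/-- Transportation cost of a path. -/
noncomputable def pathCost (p : Finset N.E) : ℝ := ∑ e ∈ p, N.b e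

/-- `α`: the minimum transportation cost over all `s`-`t` paths. -/
noncomputable def alpha : ℝ := sInf (N.pathCost '' ↑N.P)

/-- A cut: a set of edges meeting every `s`-`t` path. -/
def IsCut (K : Finset N.E) : Prop := ∀ p ∈ N.P, ¬ Disjoint p K

/-- A minimum cut: a cut of minimum capacity. -/
def IsMinCut (K : Finset N.E) : Prop := N.IsCut K ∧ ∀ K', N.IsCut K' → N.C2 K ≤ N.C2 K'

/-- `Θ`: the maximum flow value. -/
noncomputable def Theta : ℝ := sSup (N.val '' {y | N.Feasible y})

/-- A maximum flow. -/
def IsMaxFlow (y : Finset N.E → ℝ) : Prop :=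
  N.Feasible y ∧ ∀ z, N.Feasible z → N.val z ≤ N.val y

/-- A maximum flow with minimum transportation cost (an element of `Ω`). -/
def IsMFMC (y : Finset N.E → ℝ) : Prop :=
  N.IsMaxFlow y ∧ ∀ z, N.IsMaxFlow z → N.C1 y ≤ N.C1 z

/-- Assumption 1: `x` is a max-flow with minimum transportation cost all of whose
positively used `s`-`t` paths have transportation cost exactly `α`. -/
def Assumption1 (x : Finset N.E → ℝ) : Prop :=
  N.IsMFMC x ∧ ∀ p ∈ N.P, 0 < x p → N.pathCost p = N.alpha

/-- Defender's payoff `u₁(x,μ) = p₁ F(x^μ) - C₁(x)`. -/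
noncomputable def u1 (p1 : ℝ) (y : Finset N.E → ℝ) (μ : Finset N.E) : ℝ :=
  p1 * N.effVal y μ - N.C1 y

/-- Attacker's payoff `u₂(x,μ) = p₂ F(x - x^μ) - C₂(μ)`. -/
noncomputable def u2 (p2 : ℝ) (y : Finset N.E → ℝ) (μ : Finset N.E) : ℝ :=
  p2 * (N.val y - N.effVal y μ) - N.C2 μ

/-- The defender's action set: feasible flows. -/
def Flow : Type := {y : Finset N.E → ℝ // N.Feasible y}

/-- A (finitely supported) mixed strategy of the defender. -/
def MixedF (σ : N.Flow →₀ ℝ) : Prop := (∀ y, 0 ≤ σ y) ∧ (σ.sum fun _ w => w) = 1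

/-- A mixed strategy of the attacker. -/
def MixedA (σ : Finset N.E → ℝ) : Prop := (∀ μ, 0 ≤ σ μ) ∧ ∑ μ, σ μ = 1

/-- Expectation of a function of the flow under the defender's mixed strategy. -/
noncomputable def expF (σ : N.Flow →₀ ℝ) (g : (Finset N.E → ℝ) → ℝ) : ℝ :=
  σ.sum fun y w => w * g y.1

/-- Expectation of a function of the attack under the attacker's mixed strategy. -/
noncomputable def expA (σ : Finset N.E → ℝ) (h : Finset N.E → ℝ) : ℝ :=
  ∑ μ, σ μ * h μ

/-- Expectation of a function of both actions under a mixed strategy profile. -/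
noncomputable def expFA (σ1 : N.Flow →₀ ℝ) (σ2 : Finset N.E → ℝ)
    (g : (Finset N.E → ℝ) → Finset N.E → ℝ) : ℝ :=
  σ1.sum fun y w => w * ∑ μ, σ2 μ * g y.1 μ

/-- Defender's expected payoff. -/
noncomputable def U1 (p1 : ℝ) (σ1 : N.Flow →₀ ℝ) (σ2 : Finset N.E → ℝ) : ℝ :=
  N.expFA σ1 σ2 (N.u1 p1)

/-- Attacker's expected payoff. -/
noncomputable def U2 (p2 : ℝ) (σ1 : N.Flow →₀ ℝ) (σ2 : Finset N.E → ℝ) : ℝ :=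
  N.expFA σ1 σ2 (N.u2 p2)

/-- Mixed Nash equilibrium. -/
def IsNE (p1 p2 : ℝ) (σ1 : N.Flow →₀ ℝ) (σ2 : Finset N.E → ℝ) : Prop :=
  N.MixedF σ1 ∧ N.MixedA σ2 ∧
  (∀ τ1, N.MixedF τ1 → N.U1 p1 τ1 σ2 ≤ N.U1 p1 σ1 σ2) ∧
  (∀ τ2, N.MixedA τ2 → N.U2 p2 σ1 τ2 ≤ N.U2 p2 σ1 σ2)

/-- Pure Nash equilibrium. -/
def IsPureNE (p1 p2 : ℝ) (x : Finset N.E → ℝ) (μ : Finset N.E) : Prop :=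
  N.Feasible x ∧
  (∀ y, N.Feasible y → N.u1 p1 y μ ≤ N.u1 p1 x μ) ∧
  (∀ ν, N.u2 p2 x ν ≤ N.u2 p2 x μ)

end Network

/-!
Payoffs are linear in the flow, so against a mixed attack the defender's strategy `σ¹` acts
through its mean flow `x̄`, and the support of `σ²` minimises `ν ↦ C₂(ν) + p₂ F(x̄^ν)`; call the
minimum `m`. Attacking a minimum cut gives `m ≤ Θ`, attacking nothing gives `m ≤ p₂ F(x̄)`.
Let the defender deviate to `x*/p₂` for some `x* ∈ Ω`. By Assumption 1, `C₁(x*) ≤ αΘ`, while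
`C₁(x̄) ≥ α F(x̄)`, and the deviation inequality becomes
`p₁ · 𝔼_{σ²}[F(x*^ν) - (Θ - C₂(ν))] ≤ (p₁ - α)(m - Θ) ≤ 0`.
Each term of the expectation is nonnegative (an attack on `ν` destroys at most the flow through
`ν`, which is at most `C₂(ν)`), so `F(x*^μ) = Θ - C₂(μ)` on the support of `σ²`. Hence
`C₂(μ) ≤ Θ`, and the flow destroyed by `μ` equals its capacity, i.e. `μ` is saturated by `x*`.
-/

namespace Network

open Finset

variable (N : Network)

lemma P_subset_Lam : N.P ⊆ N.Lam := subset_union_left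

lemma pathCost_nonneg (l : Finset N.E) : 0 ≤ N.pathCost l :=
  sum_nonneg fun e _ => N.b_nonneg e

lemma alpha_nonneg : 0 ≤ N.alpha :=
  Real.sInf_nonneg <| by rintro _ ⟨p, _, rfl⟩; exact N.pathCost_nonneg p

lemma alpha_le_pathCost {p : Finset N.E} (hp : p ∈ N.P) : N.alpha ≤ N.pathCost p :=
  csInf_le ⟨0, by rintro _ ⟨q, _, rfl⟩; exact N.pathCost_nonneg q⟩ ⟨p, hp, rfl⟩

lemma edgeFlow_mono {y z : Finset N.E → ℝ} (h : ∀ l, y l ≤ z l) (e : N.E) :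
    N.edgeFlow y e ≤ N.edgeFlow z e :=
  sum_le_sum fun l _ => h l

lemma effVal_nonneg {y : Finset N.E → ℝ} (hy : ∀ l, 0 ≤ y l) (ν : Finset N.E) :
    0 ≤ N.effVal y ν :=
  sum_nonneg fun p _ => hy p

@[simp]
lemma effVal_empty (y : Finset N.E → ℝ) : N.effVal y ∅ = N.val y := by
  simp [effVal, val]

lemma effVal_eq_zero_of_isCut {K : Finset N.E} (hK : N.IsCut K) (y : Finset N.E → ℝ) :
    N.effVal y K = 0 := by
  rw [effVal, filter_false_of_mem hK, sum_empty]

@[simp]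
lemma C2_empty : N.C2 ∅ = 0 := sum_empty

lemma C1_eq_sum_pathCost (y : Finset N.E → ℝ) :
    N.C1 y = ∑ l ∈ N.Lam, N.pathCost l * y l := by
  simp only [C1, edgeFlow, pathCost, mul_sum, sum_mul, sum_filter]
  rw [sum_comm]
  simp only [mul_ite, mul_zero, sum_ite_mem, univ_inter]

lemma alpha_mul_val_le_C1 {y : Finset N.E → ℝ} (hy : ∀ l, 0 ≤ y l) :
    N.alpha * N.val y ≤ N.C1 y := by
  rw [C1_eq_sum_pathCost, val, mul_sum]
  calc ∑ p ∈ N.P, N.alpha * y p ≤ ∑ p ∈ N.P, N.pathCost p * y p :=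
        sum_le_sum fun p hp => mul_le_mul_of_nonneg_right (N.alpha_le_pathCost hp) (hy p)
    _ ≤ ∑ l ∈ N.Lam, N.pathCost l * y l :=
        sum_le_sum_of_subset_of_nonneg N.P_subset_Lam
          fun l _ _ => mul_nonneg (N.pathCost_nonneg l) (hy l)

lemma val_sub_effVal_le_sum_edgeFlow {y : Finset N.E → ℝ} (hy : ∀ l, 0 ≤ y l)
    (ν : Finset N.E) : N.val y - N.effVal y ν ≤ ∑ f ∈ ν, N.edgeFlow y f := by
  have hhit : N.val y - N.effVal y ν = ∑ p ∈ N.P.filter (fun p => ¬ Disjoint p ν), y p := by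
    rw [val, effVal, ← sum_filter_add_sum_filter_not N.P (fun p => Disjoint p ν)]
    ring
  have hswap : ∑ f ∈ ν, N.edgeFlow y f
      = ∑ l ∈ N.Lam.filter (fun l => ¬ Disjoint l ν), ∑ f ∈ ν.filter (· ∈ l), y l :=
    sum_comm' fun f l => by simp only [mem_filter, not_disjoint_iff]; tauto
  rw [hhit, hswap]
  calc ∑ p ∈ N.P.filter (fun p => ¬ Disjoint p ν), y p
      ≤ ∑ p ∈ N.P.filter (fun p => ¬ Disjoint p ν), ∑ f ∈ ν.filter (· ∈ p), y p := by
        refine sum_le_sum fun p hp => ?_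
        obtain ⟨f, hfp, hfν⟩ := not_disjoint_iff.mp (mem_filter.mp hp).2
        exact single_le_sum (f := fun _ => y p) (fun _ _ => hy p) (mem_filter.mpr ⟨hfν, hfp⟩)
    _ ≤ ∑ l ∈ N.Lam.filter (fun l => ¬ Disjoint l ν), ∑ f ∈ ν.filter (· ∈ l), y l :=
        sum_le_sum_of_subset_of_nonneg (filter_subset_filter _ N.P_subset_Lam)
          fun l _ _ => sum_nonneg fun _ _ => hy l

lemma val_sub_C2_le_effVal {y : Finset N.E → ℝ} (hy : N.Feasible y) (ν : Finset N.E) :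
    N.val y - N.C2 ν ≤ N.effVal y ν := by
  have := N.val_sub_effVal_le_sum_edgeFlow hy.1 ν
  have : ∑ f ∈ ν, N.edgeFlow y f ≤ N.C2 ν := sum_le_sum fun f _ => hy.2.2 f
  linarith

lemma edgeFlow_eq_of_C2_le_val_sub_effVal {y : Finset N.E → ℝ} (hy : N.Feasible y)
    {μ : Finset N.E} (h : N.C2 μ ≤ N.val y - N.effVal y μ) :
    ∀ e ∈ μ, N.edgeFlow y e = N.c e := by
  have hcap : ∀ e ∈ μ, N.edgeFlow y e ≤ N.c e := fun e _ => hy.2.2 e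
  refine (sum_eq_sum_iff_of_le hcap).mp (le_antisymm (sum_le_sum hcap) ?_)
  exact h.trans (N.val_sub_effVal_le_sum_edgeFlow hy.1 μ)

lemma val_eq_Theta {y : Finset N.E → ℝ} (hy : N.IsMaxFlow y) : N.val y = N.Theta := by
  have hmax : IsGreatest (N.val '' {z | N.Feasible z}) (N.val y) :=
    ⟨⟨y, hy.1, rfl⟩, by rintro _ ⟨z, hz, rfl⟩; exact hy.2 z hz⟩
  exact hmax.csSup_eq.symm

noncomputable def pathPart (y : Finset N.E → ℝ) : Finset N.E → ℝ :=
  fun l => if l ∈ N.P then y l else 0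

lemma pathPart_le {y : Finset N.E → ℝ} (hy : ∀ l, 0 ≤ y l) (l : Finset N.E) :
    N.pathPart y l ≤ y l := by
  unfold pathPart
  split_ifs
  exacts [le_rfl, hy l]

lemma feasible_pathPart {y : Finset N.E → ℝ} (hy : N.Feasible y) : N.Feasible (N.pathPart y) := by
  refine ⟨fun l => ?_, fun l hl => ?_, fun e => ?_⟩
  · unfold pathPart; split_ifs
    exacts [hy.1 l, le_rfl]
  · exact if_neg fun hlP => hl (N.P_subset_Lam hlP)
  · exact (N.edgeFlow_mono (N.pathPart_le hy.1) e).trans (hy.2.2 e)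

lemma val_pathPart (y : Finset N.E → ℝ) : N.val (N.pathPart y) = N.val y :=
  sum_congr rfl fun _ hp => if_pos hp

lemma isMaxFlow_pathPart {y : Finset N.E → ℝ} (hy : N.IsMaxFlow y) :
    N.IsMaxFlow (N.pathPart y) :=
  ⟨N.feasible_pathPart hy.1, fun z hz => (N.val_pathPart y).symm ▸ hy.2 z hz⟩

lemma C1_pathPart_of_assumption1 {x : Finset N.E → ℝ} (hx : N.Assumption1 x) :
    N.C1 (N.pathPart x) = N.alpha * N.val x := by
  rw [C1_eq_sum_pathCost, val, mul_sum]
  simp only [pathPart, mul_ite, mul_zero]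
  rw [← sum_filter, filter_mem_eq_inter, inter_eq_right.mpr N.P_subset_Lam]
  refine sum_congr rfl fun p hp => ?_
  rcases (hx.1.1.1.1 p).eq_or_lt with hxp | hxp
  · rw [← hxp, mul_zero, mul_zero]
  · rw [hx.2 p hp hxp]

lemma C1_le_alpha_mul_Theta {x xs : Finset N.E → ℝ} (hx : N.Assumption1 x)
    (hxs : N.IsMFMC xs) : N.C1 xs ≤ N.alpha * N.Theta :=
  calc N.C1 xs ≤ N.C1 (N.pathPart x) := hxs.2 _ (N.isMaxFlow_pathPart hx.1.1)
    _ = N.alpha * N.Theta := by rw [N.C1_pathPart_of_assumption1 hx, N.val_eq_Theta hx.1.1]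

lemma feasible_smul {y : Finset N.E → ℝ} (hy : N.Feasible y) {a : ℝ} (ha₀ : 0 ≤ a)
    (ha₁ : a ≤ 1) : N.Feasible (a • y) := by
  refine ⟨fun l => mul_nonneg ha₀ (hy.1 l), fun l hl => by simp [hy.2.1 l hl], fun e => ?_⟩
  calc N.edgeFlow (a • y) e = a * N.edgeFlow y e := by simp [edgeFlow, mul_sum]
    _ ≤ 1 * N.c e := mul_le_mul ha₁ (hy.2.2 e) (sum_nonneg fun l _ => hy.1 l) zero_le_one
    _ = N.c e := one_mul _

lemma effVal_smul (a : ℝ) (y : Finset N.E → ℝ) : N.effVal (a • y) = a • N.effVal y := by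
  ext ν
  simp [effVal, mul_sum]

lemma C1_smul (a : ℝ) (y : Finset N.E → ℝ) : N.C1 (a • y) = a * N.C1 y := by
  simp only [C1_eq_sum_pathCost, mul_sum, Pi.smul_apply, smul_eq_mul]
  exact sum_congr rfl fun _ _ => by ring

lemma expA_sub (σ f g : Finset N.E → ℝ) :
    N.expA σ (fun ν => f ν - g ν) = N.expA σ f - N.expA σ g := by
  simp only [expA, mul_sub, sum_sub_distrib]

lemma expA_const_mul (σ f : Finset N.E → ℝ) (a : ℝ) :
    N.expA σ (fun ν => a * f ν) = a * N.expA σ f := by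
  simp only [expA, mul_sum]
  exact sum_congr rfl fun _ _ => by ring

lemma expA_smul (σ f : Finset N.E → ℝ) (a : ℝ) : N.expA σ (a • f) = a * N.expA σ f :=
  N.expA_const_mul σ f a

lemma expA_const {σ : Finset N.E → ℝ} (hσ : N.MixedA σ) (a : ℝ) :
    N.expA σ (fun _ => a) = a := by
  rw [expA, ← sum_mul, hσ.2, one_mul]

lemma expA_pi_single (ν : Finset N.E) (h : Finset N.E → ℝ) :
    N.expA (Pi.single ν 1) h = h ν := by
  simp [expA, Pi.single_apply]

lemma mixedA_pi_single (ν : Finset N.E) : N.MixedA (Pi.single ν 1) :=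
  ⟨fun μ => by rw [Pi.single_apply]; split_ifs <;> norm_num, by simp⟩

lemma apply_le_expA_of_best {σ h : Finset N.E → ℝ}
    (hbest : ∀ τ, N.MixedA τ → N.expA τ h ≤ N.expA σ h) (ν : Finset N.E) :
    h ν ≤ N.expA σ h :=
  N.expA_pi_single ν h ▸ hbest _ (N.mixedA_pi_single ν)

lemma apply_eq_zero_of_expA_nonpos {σ f : Finset N.E → ℝ} (hσ : ∀ ν, 0 ≤ σ ν)
    (hf : ∀ ν, 0 ≤ f ν) (h : N.expA σ f ≤ 0) {μ : Finset N.E} (hμ : σ μ ≠ 0) : f μ = 0 := by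
  have hterms : ∀ ν ∈ univ, 0 ≤ σ ν * f ν := fun ν _ => mul_nonneg (hσ ν) (hf ν)
  have hsum : N.expA σ f = 0 := le_antisymm h (sum_nonneg hterms)
  exact (mul_eq_zero.mp ((sum_eq_zero_iff_of_nonneg hterms).mp hsum μ (mem_univ μ))).resolve_left hμ

lemma apply_eq_expA_of_best {σ h : Finset N.E → ℝ} (hσ : N.MixedA σ)
    (hbest : ∀ τ, N.MixedA τ → N.expA τ h ≤ N.expA σ h) {μ : Finset N.E} (hμ : σ μ ≠ 0) :
    h μ = N.expA σ h := by
  have hgap := N.apply_eq_zero_of_expA_nonpos (f := fun ν => N.expA σ h - h ν) hσ.1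
    (fun ν => sub_nonneg.mpr (N.apply_le_expA_of_best hbest ν))
    (by rw [N.expA_sub, N.expA_const hσ, sub_self]) hμ
  exact (sub_eq_zero.mp hgap).symm

noncomputable def meanFlow (σ : N.Flow →₀ ℝ) : Finset N.E → ℝ := fun l => N.expF σ (fun y => y l)

lemma expF_sum {ι : Type*} (σ : N.Flow →₀ ℝ) (T : Finset ι)
    (g : ι → (Finset N.E → ℝ) → ℝ) :
    N.expF σ (fun y => ∑ i ∈ T, g i y) = ∑ i ∈ T, N.expF σ (g i) := by
  simp only [expF, Finsupp.sum, mul_sum]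
  exact sum_comm

lemma expF_sub (σ : N.Flow →₀ ℝ) (f g : (Finset N.E → ℝ) → ℝ) :
    N.expF σ (fun y => f y - g y) = N.expF σ f - N.expF σ g := by
  simp only [expF, Finsupp.sum, mul_sub, sum_sub_distrib]

lemma expF_const_mul (σ : N.Flow →₀ ℝ) (f : (Finset N.E → ℝ) → ℝ) (a : ℝ) :
    N.expF σ (fun y => a * f y) = a * N.expF σ f := by
  simp only [expF, Finsupp.sum, mul_sum]
  exact sum_congr rfl fun _ _ => by ring

lemma expF_const {σ : N.Flow →₀ ℝ} (hσ : N.MixedF σ) (a : ℝ) : N.expF σ (fun _ => a) = a := by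
  rw [expF, Finsupp.sum, ← sum_mul, show ∑ y ∈ σ.support, σ y = 1 from hσ.2, one_mul]

lemma expF_mono {σ : N.Flow →₀ ℝ} (hσ : N.MixedF σ) {f g : (Finset N.E → ℝ) → ℝ}
    (h : ∀ y : N.Flow, f y.1 ≤ g y.1) : N.expF σ f ≤ N.expF σ g :=
  sum_le_sum fun y _ => mul_le_mul_of_nonneg_left (h y) (hσ.1 y)

lemma expF_val (σ : N.Flow →₀ ℝ) : N.expF σ N.val = N.val (N.meanFlow σ) :=
  N.expF_sum σ N.P fun p y => y p

lemma expF_effVal (σ : N.Flow →₀ ℝ) (ν : Finset N.E) :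
    N.expF σ (fun y => N.effVal y ν) = N.effVal (N.meanFlow σ) ν :=
  N.expF_sum σ _ fun p y => y p

lemma expF_edgeFlow (σ : N.Flow →₀ ℝ) (e : N.E) :
    N.expF σ (fun y => N.edgeFlow y e) = N.edgeFlow (N.meanFlow σ) e :=
  N.expF_sum σ _ fun l y => y l

lemma expF_C1 (σ : N.Flow →₀ ℝ) : N.expF σ N.C1 = N.C1 (N.meanFlow σ) := by
  rw [show N.C1 = fun y => ∑ l ∈ N.Lam, N.pathCost l * y l from funext N.C1_eq_sum_pathCost,
    expF_sum]
  simp only [expF_const_mul]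
  rfl

lemma feasible_meanFlow {σ : N.Flow →₀ ℝ} (hσ : N.MixedF σ) : N.Feasible (N.meanFlow σ) := by
  refine ⟨fun l => ?_, fun l hl => ?_, fun e => ?_⟩
  · calc (0 : ℝ) = N.expF σ (fun _ => 0) := (N.expF_const hσ 0).symm
      _ ≤ N.meanFlow σ l := N.expF_mono hσ fun y => y.2.1 l
  · exact sum_eq_zero fun y _ => by simp [y.2.2.1 l hl]
  · rw [← expF_edgeFlow, ← N.expF_const hσ (N.c e)]
    exact N.expF_mono hσ fun y => y.2.2.2 e

lemma meanFlow_single (v : N.Flow) : N.meanFlow (Finsupp.single v 1) = v.1 := by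
  ext l
  simp [meanFlow, expF]

lemma mixedF_single (v : N.Flow) : N.MixedF (Finsupp.single v 1) :=
  ⟨fun y => by rw [Finsupp.single_apply]; split_ifs <;> norm_num, Finsupp.sum_single_index rfl⟩

lemma expFA_eq_expA_expF (σ1 : N.Flow →₀ ℝ) (σ2 : Finset N.E → ℝ)
    (g : (Finset N.E → ℝ) → Finset N.E → ℝ) :
    N.expFA σ1 σ2 g = N.expA σ2 (fun ν => N.expF σ1 (fun y => g y ν)) := by
  simp only [expFA, expA, expF, Finsupp.sum, mul_sum]
  rw [sum_comm]
  exact sum_congr rfl fun _ _ => sum_congr rfl fun _ _ => by ring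

lemma U1_eq_expA (p1 : ℝ) (σ1 : N.Flow →₀ ℝ) (σ2 : Finset N.E → ℝ) :
    N.U1 p1 σ1 σ2 = N.expA σ2 (N.u1 p1 (N.meanFlow σ1)) := by
  simp only [U1, expFA_eq_expA_expF, u1, expF_sub, expF_const_mul, expF_effVal, expF_C1]
  rfl

lemma U2_eq_expA {σ1 : N.Flow →₀ ℝ} (hσ1 : N.MixedF σ1) (p2 : ℝ) (σ2 : Finset N.E → ℝ) :
    N.U2 p2 σ1 σ2 = N.expA σ2 (N.u2 p2 (N.meanFlow σ1)) := by
  simp only [U2, expFA_eq_expA_expF, u2, expF_sub, expF_const_mul, expF_effVal, expF_val,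
    N.expF_const hσ1]
  rfl

lemma expA_u1 {σ : Finset N.E → ℝ} (hσ : N.MixedA σ) (p1 : ℝ) (y : Finset N.E → ℝ) :
    N.expA σ (N.u1 p1 y) = p1 * N.expA σ (N.effVal y) - N.C1 y := by
  change N.expA σ (fun ν => p1 * N.effVal y ν - N.C1 y) = _
  rw [expA_sub, expA_const_mul, N.expA_const hσ]

section Equilibrium

variable {N} {p1 p2 : ℝ} {σ1 : N.Flow →₀ ℝ} {σ2 : Finset N.E → ℝ}

lemma attack_support_minimizes (hNE : N.IsNE p1 p2 σ1 σ2) {μ : Finset N.E} (hμ : σ2 μ ≠ 0) :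
    (∀ ν, N.C2 μ + p2 * N.effVal (N.meanFlow σ1) μ ≤ N.C2 ν + p2 * N.effVal (N.meanFlow σ1) ν) ∧
    N.expA σ2 N.C2 + p2 * N.expA σ2 (N.effVal (N.meanFlow σ1))
      = N.C2 μ + p2 * N.effVal (N.meanFlow σ1) μ := by
  obtain ⟨hσ1, hσ2, -, hattack⟩ := hNE
  set xb := N.meanFlow σ1
  have hbest : ∀ τ, N.MixedA τ → N.expA τ (N.u2 p2 xb) ≤ N.expA σ2 (N.u2 p2 xb) :=
    fun τ hτ => by simpa only [N.U2_eq_expA hσ1] using hattack τ hτ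
  have hexp : N.expA σ2 (N.u2 p2 xb)
      = p2 * N.val xb - (N.expA σ2 N.C2 + p2 * N.expA σ2 (N.effVal xb)) := by
    change N.expA σ2 (fun ν => p2 * (N.val xb - N.effVal xb ν) - N.C2 ν) = _
    rw [expA_sub, expA_const_mul, expA_sub, N.expA_const hσ2]
    ring
  have hμ_best := N.apply_eq_expA_of_best hσ2 hbest hμ
  simp only [u2] at hμ_best
  refine ⟨fun ν => ?_, by linarith⟩
  have hν := N.apply_le_expA_of_best hbest ν
  simp only [u2] at hν
  linarith

lemma defender_pure_deviation_le (hNE : N.IsNE p1 p2 σ1 σ2) {v : Finset N.E → ℝ} (hv : N.Feasible v) :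
    p1 * N.expA σ2 (N.effVal v) - N.C1 v
      ≤ p1 * N.expA σ2 (N.effVal (N.meanFlow σ1)) - N.C1 (N.meanFlow σ1) := by
  have h := hNE.2.2.1 _ (N.mixedF_single ⟨v, hv⟩)
  rwa [U1_eq_expA, U1_eq_expA, N.meanFlow_single ⟨v, hv⟩, N.expA_u1 hNE.2.1, N.expA_u1 hNE.2.1] at h

theorem effVal_eq_Theta_sub_C2_of_support (hp1 : N.alpha < p1) (hp2 : 1 < p2)
    {x : Finset N.E → ℝ} (hx : N.Assumption1 x) {K : Finset N.E} (hK : N.IsCut K)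
    (hKΘ : N.C2 K = N.Theta) (hNE : N.IsNE p1 p2 σ1 σ2) {μ : Finset N.E} (hμ : σ2 μ ≠ 0)
    {xs : Finset N.E → ℝ} (hxs : N.IsMFMC xs) :
    N.effVal xs μ = N.Theta - N.C2 μ := by
  obtain ⟨hmin, havg⟩ := attack_support_minimizes hNE hμ
  set xb := N.meanFlow σ1
  set m := N.C2 μ + p2 * N.effVal xb μ
  have hmΘ : m ≤ N.Theta := by simpa [N.effVal_eq_zero_of_isCut hK, hKΘ] using hmin K
  have hm_val : m ≤ p2 * N.val xb := by simpa using hmin ∅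
  have hαm : N.alpha * m ≤ p2 * N.C1 xb :=
    calc N.alpha * m ≤ N.alpha * (p2 * N.val xb) := mul_le_mul_of_nonneg_left hm_val N.alpha_nonneg
      _ = p2 * (N.alpha * N.val xb) := by ring
      _ ≤ p2 * N.C1 xb := mul_le_mul_of_nonneg_left
          (N.alpha_mul_val_le_C1 (N.feasible_meanFlow hNE.1).1) (by linarith)
  have hdev := defender_pure_deviation_le hNE
    (N.feasible_smul hxs.1.1 (inv_nonneg.mpr (by linarith)) (inv_le_one_of_one_le₀ hp2.le))
  rw [effVal_smul, expA_smul, C1_smul] at hdev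
  have hsurplus : ∀ ν, 0 ≤ N.effVal xs ν - (N.Theta - N.C2 ν) := fun ν => by
    have := N.val_sub_C2_le_effVal hxs.1.1 ν
    rw [N.val_eq_Theta hxs.1] at this
    linarith
  have hexp : N.expA σ2 (fun ν => N.effVal xs ν - (N.Theta - N.C2 ν)) ≤ 0 := by
    rw [expA_sub, expA_sub, N.expA_const hNE.2.1]
    have hdev' : p1 * N.expA σ2 (N.effVal xs) - N.C1 xs
        ≤ p1 * (m - N.expA σ2 N.C2) - p2 * N.C1 xb := by
      have := mul_le_mul_of_nonneg_left hdev (by linarith : (0 : ℝ) ≤ p2)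
      field_simp at this
      have hsplit : p2 * (p1 * N.expA σ2 (N.effVal xb) - N.C1 xb)
          = p1 * (m - N.expA σ2 N.C2) - p2 * N.C1 xb := by
        rw [← havg]
        ring
      linarith
    have hgain : p1 * (N.expA σ2 (N.effVal xs) - (N.Theta - N.expA σ2 N.C2))
        ≤ (p1 - N.alpha) * (m - N.Theta) := by
      linarith [N.C1_le_alpha_mul_Theta hx hxs]
    have hp1_pos : 0 < p1 := N.alpha_nonneg.trans_lt hp1
    exact nonpos_of_mul_nonpos_right (hgain.trans
      (mul_nonpos_of_nonneg_of_nonpos (sub_nonneg.mpr hp1.le) (sub_nonpos.mpr hmΘ))) hp1_pos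
  linarith [N.apply_eq_zero_of_expA_nonpos hNE.2.1.1 hsurplus hexp hμ]

end Equilibrium

end Network

/-- at every mixed Nash equilibrium (with `p₁ > α`, `p₂ > 1`, Assumption 1),
every attack `μ` in the support of `σ²*` has cost `C₂(μ) ≤ Θ` (the cost of attacking a
minimum cut), and every edge disrupted by such a `μ` is saturated by every maximum flow
with minimum transportation cost. -/
theorem equilibrium_attacks_bounded_and_saturated (N : Network) (p1 p2 : ℝ)
    (hp1 : N.alpha < p1) (hp2 : 1 < p2)
    (hA1 : ∃ x, N.Assumption1 x)
    (hMFMC : ∃ K, N.IsMinCut K ∧ N.C2 K = N.Theta)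
    (σ1 : N.Flow →₀ ℝ) (σ2 : Finset N.E → ℝ)
    (hNE : N.IsNE p1 p2 σ1 σ2) :
    ∀ μ, σ2 μ ≠ 0 →
      N.C2 μ ≤ N.Theta ∧
      ∀ e ∈ μ, ∀ xs, N.IsMFMC xs → N.edgeFlow xs e = N.c e := by
  obtain ⟨x, hx⟩ := hA1
  obtain ⟨K, hK, hKΘ⟩ := hMFMC
  intro μ hμ
  have hsurvive : ∀ xs, N.IsMFMC xs → N.effVal xs μ = N.Theta - N.C2 μ := fun xs hxs =>
    Network.effVal_eq_Theta_sub_C2_of_support hp1 hp2 hx hK.1 hKΘ hNE hμ hxs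
  refine ⟨?_, fun e he xs hxs => ?_⟩
  · linarith [hsurvive x hx.1, N.effVal_nonneg hx.1.1.1.1 μ]
  · refine N.edgeFlow_eq_of_C2_le_val_sub_effVal hxs.1.1 ?_ e he
    rw [hsurvive xs hxs, N.val_eq_Theta hxs.1, sub_sub_cancel]
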